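/- arXiv:2605.19372 — 4 statements merged into one kernel-verified Lean document; each statement's English description precedes it below -/
import Mathlib

section
/- Let 0 < α < n and suppose a kernel K̃_t(x,y) satisfies |K̃_t(x,y)| ≤ C ∫₀^t ∫₀^∞ (s+r)^{-n/2} e^{-A|x-y|²/(s+r)} · r^{α/2-1}/(s+r) dr ds for constants C, A > 0. Then |K̃_t(x,y)| ≤ C' |x-y|^{-(n-α)} · t/|x-y|² for all x ≠ y and t > 0, with C' independent of x, y, t. -/
open MeasureTheory Set Real

/-!
With `c = A‖x - y‖²` and `k = n/2 + 1`, the factor `(s + u)^(-k) e^(-c/(s + u))` is at most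
`k^k c^(-k)` (maximise over `s + u`) and at most `u^(-k)`. Using the first bound for `u ≤ c` and
the second for `u > c`, the `u`-integral against `u^(α/2 - 1)` is `O(c^(α/2 - k))` uniformly in
`s ≥ 0`, so the `s`-integral over `(0, t]` is `O(t c^(α/2 - k))`, and
`c^(α/2 - k) = A^(α/2 - k) ‖x - y‖^(-(n - α)) ‖x - y‖^(-2)`.
-/

lemma rpow_neg_mul_exp_neg_div_le {k c v : ℝ} (hk : 0 < k) (hc : 0 < c) (hv : 0 < v) :
    v ^ (-k) * exp (-(c / v)) ≤ k ^ k * c ^ (-k) := by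
  have hz : 0 < c / (k * v) := by positivity
  -- `log z ≤ z - 1` with `z = c / (k v)`, raised to the power `k`
  have hpow : (c / (k * v)) ^ k ≤ exp (c / v) := by
    rw [rpow_def_of_pos hz, exp_le_exp]
    calc log (c / (k * v)) * k ≤ c / (k * v) * k := by
          gcongr
          exact (log_le_sub_one_of_pos hz).trans (by linarith)
      _ = c / v := by field_simp
  calc v ^ (-k) * exp (-(c / v)) ≤ v ^ (-k) * ((c / (k * v)) ^ k)⁻¹ := by
        rw [exp_neg]
        gcongr
    _ = k ^ k * c ^ (-k) := by
        rw [div_rpow hc.le (by positivity), mul_rpow hk.le hv.le, rpow_neg hv.le,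
          rpow_neg hc.le]
        field_simp

lemma rpow_neg_mul_exp_neg_div_le_rpow_neg {k c s u : ℝ} (hk : 0 < k) (hc : 0 ≤ c)
    (hs : 0 ≤ s) (hu : 0 < u) : (s + u) ^ (-k) * exp (-(c / (s + u))) ≤ u ^ (-k) :=
  calc (s + u) ^ (-k) * exp (-(c / (s + u))) ≤ (s + u) ^ (-k) * 1 := by
        gcongr
        exact exp_le_one_iff.2 (neg_nonpos.2 (by positivity))
    _ ≤ u ^ (-k) := by
        rw [mul_one]
        exact rpow_le_rpow_of_nonpos hu (by linarith) (by linarith)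

/-- Integrable majorant of `u ^ (a - 1) * (s + u) ^ (-k) * exp (-(c / (s + u)))`,
uniform in `s ≥ 0`. -/
noncomputable def kernelMajorant (a k c u : ℝ) : ℝ :=
  if u ≤ c then k ^ k * c ^ (-k) * u ^ (a - 1) else u ^ (a - 1 - k)

section kernelMajorant

variable {a k c : ℝ}

lemma rpow_mul_kernel_le_kernelMajorant {s u : ℝ} (hk : 0 < k) (hc : 0 < c) (hs : 0 ≤ s)
    (hu : 0 < u) :
    u ^ (a - 1) * ((s + u) ^ (-k) * exp (-(c / (s + u)))) ≤ kernelMajorant a k c u := by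
  unfold kernelMajorant
  split_ifs
  · calc _ ≤ u ^ (a - 1) * (k ^ k * c ^ (-k)) :=
          mul_le_mul_of_nonneg_left (rpow_neg_mul_exp_neg_div_le hk hc (by linarith))
            (by positivity)
      _ = _ := mul_comm _ _
  · calc u ^ (a - 1) * ((s + u) ^ (-k) * exp (-(c / (s + u)))) ≤ u ^ (a - 1) * u ^ (-k) := by
          gcongr
          exact rpow_neg_mul_exp_neg_div_le_rpow_neg hk hc.le hs hu
      _ = u ^ (a - 1 - k) := by rw [sub_eq_add_neg _ k, rpow_add hu]

lemma integrableOn_Ioc_kernelMajorant (ha : 0 < a) (hc : 0 < c) :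
    IntegrableOn (kernelMajorant a k c) (Ioc 0 c) := by
  refine IntegrableOn.congr_fun ?_ (fun u hu => (if_pos hu.2).symm) measurableSet_Ioc
  have h := (intervalIntegral.intervalIntegrable_rpow' (a := 0) (b := c)
    (show -1 < a - 1 by linarith)).const_mul (k ^ k * c ^ (-k))
  rwa [intervalIntegrable_iff_integrableOn_Ioc_of_le hc.le] at h

lemma integrableOn_Ioi_kernelMajorant (hak : a < k) (hc : 0 < c) :
    IntegrableOn (kernelMajorant a k c) (Ioi c) :=
  (integrableOn_Ioi_rpow_of_lt (by linarith) hc).congr_fun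
    (fun u hu => (if_neg (not_le.2 hu)).symm) measurableSet_Ioi

lemma integral_Ioi_kernelMajorant (ha : 0 < a) (hak : a < k) (hc : 0 < c) :
    ∫ u in Ioi 0, kernelMajorant a k c u = (k ^ k / a + 1 / (k - a)) * c ^ (a - k) := by
  have hnear : ∫ u in Ioc 0 c, kernelMajorant a k c u = k ^ k / a * c ^ (a - k) := by
    unfold kernelMajorant
    rw [setIntegral_congr_fun measurableSet_Ioc (fun u hu => if_pos hu.2),
      integral_const_mul, ← intervalIntegral.integral_of_le hc.le,
      integral_rpow (Or.inl (by linarith)), sub_add_cancel, zero_rpow ha.ne', sub_zero,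
      sub_eq_add_neg a k, rpow_add hc]
    field_simp
  have hfar : ∫ u in Ioi c, kernelMajorant a k c u = 1 / (k - a) * c ^ (a - k) := by
    unfold kernelMajorant
    rw [setIntegral_congr_fun measurableSet_Ioi (fun u hu => if_neg (not_le.2 hu)),
      integral_Ioi_rpow_of_lt (by linarith) hc, show a - 1 - k + 1 = a - k by ring,
      show a - k = -(k - a) by ring]
    field_simp
  rw [← Ioc_union_Ioi_eq_Ioi hc.le, setIntegral_union (Ioc_disjoint_Ioi le_rfl)
    measurableSet_Ioi (integrableOn_Ioc_kernelMajorant ha hc)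
    (integrableOn_Ioi_kernelMajorant hak hc), hnear, hfar, add_mul]

lemma norm_integral_rpow_mul_kernel_le {s : ℝ} (ha : 0 < a) (hak : a < k) (hc : 0 < c)
    (hs : 0 ≤ s) :
    ‖∫ u in Ioi 0, u ^ (a - 1) * ((s + u) ^ (-k) * exp (-(c / (s + u))))‖ ≤
      (k ^ k / a + 1 / (k - a)) * c ^ (a - k) := by
  rw [← integral_Ioi_kernelMajorant ha hak hc]
  refine norm_integral_le_of_norm_le ?_ ?_
  · rw [← Ioc_union_Ioi_eq_Ioi hc.le]
    exact (integrableOn_Ioc_kernelMajorant ha hc).union (integrableOn_Ioi_kernelMajorant hak hc)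
  · filter_upwards [ae_restrict_mem measurableSet_Ioi] with u (hu : 0 < u)
    have hsu : 0 < s + u := by linarith
    rw [norm_of_nonneg (by positivity)]
    exact rpow_mul_kernel_le_kernelMajorant (by linarith) hc hs hu

end kernelMajorant

theorem stmt_10_general (n : ℕ) (α C A : ℝ) (hα : 0 < α) (hαn : α < n)
    (hC : 0 < C) (hA : 0 < A)
    (K : ℝ → EuclideanSpace ℝ (Fin n) → EuclideanSpace ℝ (Fin n) → ℝ)
    (hK : ∀ t > (0 : ℝ), ∀ x y, |K t x y| ≤
      C * ∫ s in Ioc (0 : ℝ) t, ∫ u in Ioi (0 : ℝ),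
        (s + u) ^ (-(n : ℝ) / 2) * Real.exp (-A * ‖x - y‖ ^ 2 / (s + u)) *
          (u ^ (α / 2 - 1) / (s + u))) :
    ∃ C' > (0 : ℝ), ∀ t > (0 : ℝ), ∀ x y : EuclideanSpace ℝ (Fin n), x ≠ y →
      |K t x y| ≤ C' * ‖x - y‖ ^ (-((n : ℝ) - α)) * (t / ‖x - y‖ ^ 2) := by
  set a : ℝ := α / 2
  set k : ℝ := (n : ℝ) / 2 + 1 with hk
  have ha : 0 < a := by positivity
  have hak : a < k := by simp only [a, k]; linarith
  set D : ℝ := k ^ k / a + 1 / (k - a)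
  have hD : 0 < D := add_pos (by positivity) (one_div_pos.2 (sub_pos.2 hak))
  refine ⟨C * D * A ^ (a - k), by positivity, fun t ht x y hxy => ?_⟩
  set R := ‖x - y‖
  have hR : 0 < R := norm_sub_pos_iff.2 hxy
  have hc : 0 < A * R ^ 2 := by positivity
  have hinner : ∀ s ∈ Ioc 0 t, ‖∫ u in Ioi 0, (s + u) ^ (-(n : ℝ) / 2) *
      exp (-A * R ^ 2 / (s + u)) * (u ^ (a - 1) / (s + u))‖ ≤ D * (A * R ^ 2) ^ (a - k) := by
    intro s hs
    rw [setIntegral_congr_fun measurableSet_Ioi (g := fun u =>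
      u ^ (a - 1) * ((s + u) ^ (-k) * exp (-(A * R ^ 2 / (s + u))))) fun u (hu : 0 < u) => by
        have hsu : 0 < s + u := by linarith [hs.1]
        dsimp only
        rw [hk, neg_add, rpow_add hsu, rpow_neg_one, neg_mul, neg_div, neg_div]
        ring]
    exact norm_integral_rpow_mul_kernel_le ha hak hc hs.1.le
  have houter := norm_setIntegral_le_of_norm_le_const (measure_Ioc_lt_top (μ := volume)) hinner
  rw [Real.volume_real_Ioc_of_le ht.le, sub_zero] at houter
  have hscale : (A * R ^ 2) ^ (a - k) = A ^ (a - k) * (R ^ (-((n : ℝ) - α)) / R ^ 2) := by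
    rw [mul_rpow hA.le (by positivity), ← rpow_natCast, ← rpow_mul hR.le,
      show ((2 : ℕ) : ℝ) * (a - k) = -((n : ℝ) - α) - 2 by ring, rpow_sub hR, rpow_two,
      rpow_natCast]
  calc |K t x y| ≤ C * ‖∫ s in Ioc 0 t, ∫ u in Ioi 0, (s + u) ^ (-(n : ℝ) / 2) *
        exp (-A * R ^ 2 / (s + u)) * (u ^ (a - 1) / (s + u))‖ :=
        (hK t ht x y).trans (by gcongr; exact le_norm_self _)
    _ ≤ C * (D * (A * R ^ 2) ^ (a - k) * t) := by gcongr
    _ = C * D * A ^ (a - k) * R ^ (-((n : ℝ) - α)) * (t / R ^ 2) := by rw [hscale]; ring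

theorem stmt_10 (n : ℕ) (hn : 1 ≤ n) (α C A : ℝ) (hα : 0 < α) (hαn : α < n)
    (hC : 0 < C) (hA : 0 < A)
    (K : ℝ → EuclideanSpace ℝ (Fin n) → EuclideanSpace ℝ (Fin n) → ℝ)
    (hK : ∀ t > (0 : ℝ), ∀ x y, |K t x y| ≤
      C * ∫ s in Ioc (0 : ℝ) t, ∫ u in Ioi (0 : ℝ),
        (s + u) ^ (-(n : ℝ) / 2) * Real.exp (-A * ‖x - y‖ ^ 2 / (s + u)) *
          (u ^ (α / 2 - 1) / (s + u))) :
    ∃ C' > (0 : ℝ), ∀ t > (0 : ℝ), ∀ x y : EuclideanSpace ℝ (Fin n), x ≠ y →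
      |K t x y| ≤ C' * ‖x - y‖ ^ (-((n : ℝ) - α)) * (t / ‖x - y‖ ^ 2) :=
  stmt_10_general n α C A hα hαn hC hA K hK
end

section
/- Let 0 < α < n, 1 ≤ p < n/α, λ = n - αp, and f ∈ M^{p,λ}(ℝⁿ). For a ball B = B(x₀, r), define f₂ = f·χ_{(2B)^c}. Suppose g : ℝⁿ → ℝ satisfies |g(x)| ≤ C ∫_{(2B)^c} |x-y|^{-(n-α)} (r²/|x-y|²) |f(y)| dy for all x ∈ B. Then (1/m(B)) ∫_B |g(x)| dx ≤ C' ‖f‖_{M^{p,λ}}, with C' depending only on n, p, α, C. -/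
open MeasureTheory Set Real Metric Module

/-!
Split `(ball x₀ (2r))ᶜ` into the dyadic annuli `2ᵏ·2r ≤ ‖y - x₀‖ < 2ᵏ⁺¹·2r`. For `x ∈ ball x₀ r` and
`y` in the `k`-th annulus, `‖x - y‖ ≥ t := 2ᵏ r`, so the kernel is at most `t^(α-n) 4⁻ᵏ`, while
Hölder's inequality and the Morrey bound give
`∫_{ball x₀ 4t} |f| ≤ M |ball x₀ 4t|^(1-α/n) = M V^(1-α/n) (4t)^(n-α)` with `V = |ball 0 1|`.
The powers of `t` cancel, so the `k`-th annulus contributes at most `M V^(1-α/n) 4^(n-α) 4⁻ᵏ`;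
summing the geometric series bounds the integral uniformly in `x ∈ ball x₀ r`, hence also its
average of `|g|` over the ball.
-/

section MeasureSpace

variable {X : Type*} [MeasurableSpace X] {μ : Measure X} {F : X → ℝ} {p : ℝ}

theorem memLp_of_integrable_rpow (hF0 : ∀ x, 0 ≤ F x) (hp : 0 < p)
    (hFp : Integrable (fun x => F x ^ p) μ) : MemLp F (ENNReal.ofReal p) μ := by
  have hFm : AEStronglyMeasurable F μ := by
    have hroot : (fun x => (F x ^ p) ^ (1 / p)) = F := funext fun x => by
      rw [← rpow_mul (hF0 x), mul_one_div_cancel hp.ne', rpow_one]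
    exact hroot ▸ (hFp.aemeasurable.pow_const _).aestronglyMeasurable
  rw [← integrable_norm_rpow_iff hFm (by simpa using hp) ENNReal.ofReal_ne_top,
    ENNReal.toReal_ofReal hp.le]
  simpa only [Real.norm_of_nonneg (hF0 _)] using hFp

theorem integral_le_integral_rpow_rpow_mul_measureReal_univ [IsFiniteMeasure μ]
    (hF0 : ∀ x, 0 ≤ F x) (hp : 1 ≤ p) (hFp : Integrable (fun x => F x ^ p) μ) :
    ∫ x, F x ∂μ ≤ (∫ x, F x ^ p ∂μ) ^ (1 / p) * μ.real univ ^ (1 - 1 / p) := by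
  rcases hp.eq_or_lt with rfl | hp
  · simp
  have hpq : p.HolderConjugate (p / (p - 1)) := .conjExponent hp
  have := integral_mul_le_Lp_mul_Lq_of_nonneg hpq (.of_forall hF0)
    (.of_forall fun _ => zero_le_one) (memLp_of_integrable_rpow hF0 hpq.pos hFp) (memLp_const 1)
  have hq : 1 / (p / (p - 1)) = 1 - 1 / p := by field_simp
  simpa [hq] using this

theorem setIntegral_le_mul_measureReal_rpow_of_rpow_bound {s : Set X} (hs : 0 < μ.real s)
    (hF0 : ∀ x, 0 ≤ F x) (hp : 1 ≤ p) (hFp : IntegrableOn (fun x => F x ^ p) s μ) {θ M : ℝ}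
    (hM : μ.real s ^ (-θ) * (∫ x in s, F x ^ p ∂μ) ^ (1 / p) ≤ M) :
    ∫ x in s, F x ∂μ ≤ M * μ.real s ^ (θ + 1 - 1 / p) := by
  have : IsFiniteMeasure (μ.restrict s) :=
    isFiniteMeasure_restrict.2 (ENNReal.toReal_pos_iff.1 hs).2.ne
  have hM' : (∫ x in s, F x ^ p ∂μ) ^ (1 / p) ≤ M * μ.real s ^ θ := by
    rwa [← le_div_iff₀' (by positivity), rpow_neg hs.le, div_inv_eq_mul] at hM
  calc ∫ x in s, F x ∂μ ≤ (∫ x in s, F x ^ p ∂μ) ^ (1 / p) * μ.real s ^ (1 - 1 / p) := by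
        simpa using integral_le_integral_rpow_rpow_mul_measureReal_univ hF0 hp hFp
    _ ≤ M * μ.real s ^ θ * μ.real s ^ (1 - 1 / p) := by gcongr
    _ = M * μ.real s ^ (θ + 1 - 1 / p) := by rw [mul_assoc, ← rpow_add hs, add_sub_assoc]

theorem integrableOn_of_integrableOn_rpow {s : Set X} (hs : μ s ≠ ⊤) (hF0 : ∀ x, 0 ≤ F x)
    (hp : 1 ≤ p) (hFp : IntegrableOn (fun x => F x ^ p) s μ) : IntegrableOn F s μ :=
  have : IsFiniteMeasure (μ.restrict s) := isFiniteMeasure_restrict.2 hs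
  (memLp_of_integrable_rpow hF0 (zero_lt_one.trans_le hp) hFp).integrable (by simpa using hp)

theorem inv_measureReal_mul_setIntegral_le_of_norm_le {s : Set X} (hs : 0 < μ.real s)
    {g : X → ℝ} {c : ℝ} (hg : ∀ x ∈ s, ‖g x‖ ≤ c) : (μ.real s)⁻¹ * ∫ x in s, g x ∂μ ≤ c := by
  rw [inv_mul_le_iff₀ hs]
  exact (le_abs_self _).trans <| (norm_setIntegral_le_of_norm_le_const
    (ENNReal.toReal_pos_iff.1 hs).2 hg).trans_eq (mul_comm _ _)

theorem setIntegral_iUnion_le_tsum {ι : Type*} [Countable ι] {A : ι → Set X}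
    (hA : ∀ i, MeasurableSet (A i)) (hd : Pairwise (Function.onFun Disjoint A)) {h : X → ℝ} (h0 : ∀ x, 0 ≤ h x) {b : ι → ℝ}
    (hb : Summable b) (hle : ∀ i, ∫ x in A i, h x ∂μ ≤ b i) :
    ∫ x in ⋃ i, A i, h x ∂μ ≤ ∑' i, b i := by
  by_cases hint : IntegrableOn h (⋃ i, A i) μ
  · rw [integral_iUnion hA hd hint]
    exact (hasSum_integral_iUnion hA hd hint).summable.tsum_le_tsum hle hb
  · rw [integral_undef hint]
    exact tsum_nonneg fun i => (setIntegral_nonneg (hA i) fun x _ => h0 x).trans (hle i)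

end MeasureSpace

section Annulus

variable {X : Type*} [PseudoMetricSpace X]

def dyadicAnnulus (x₀ : X) (ρ : ℝ) (k : ℕ) : Set X :=
  (dist · x₀) ⁻¹' Ico (2 ^ k * ρ) (2 ^ (k + 1) * ρ)

theorem iUnion_dyadicAnnulus (x₀ : X) {ρ : ℝ} (hρ : 0 < ρ) :
    ⋃ k, dyadicAnnulus x₀ ρ k = (ball x₀ ρ)ᶜ := by
  have hunbdd : ¬BddAbove (range fun k : ℕ => (2 : ℝ) ^ k * ρ) := by
    rintro ⟨b, hb⟩
    obtain ⟨k, hk⟩ := pow_unbounded_of_one_lt (b / ρ) one_lt_two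
    exact (div_lt_iff₀ hρ).1 hk |>.not_ge (hb ⟨k, rfl⟩)
  have := iUnion_Ico_map_succ_eq_Ici (f := fun k : ℕ => (2 : ℝ) ^ k * ρ)
    (fun k => by gcongr <;> simp) hunbdd
  simp only [Nat.succ_eq_succ, Nat.bot_eq_zero, pow_zero, one_mul] at this
  ext y
  simp [dyadicAnnulus, ← preimage_iUnion, this]

theorem pairwise_disjoint_dyadicAnnulus (x₀ : X) {ρ : ℝ} (hρ : 0 ≤ ρ) :
    Pairwise (Function.onFun Disjoint (dyadicAnnulus x₀ ρ)) := fun _ _ hij =>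
  ((pow_right_mono₀ one_le_two).mul_const hρ |>.pairwise_disjoint_on_Ico_succ hij).preimage _

theorem measurableSet_dyadicAnnulus [MeasurableSpace X] [OpensMeasurableSpace X]
    (x₀ : X) (ρ : ℝ) (k : ℕ) : MeasurableSet (dyadicAnnulus x₀ ρ k) :=
  (continuous_id.dist continuous_const).measurable measurableSet_Ico

theorem dyadicAnnulus_subset_ball (x₀ : X) (ρ : ℝ) (k : ℕ) :
    dyadicAnnulus x₀ ρ k ⊆ ball x₀ (2 ^ (k + 1) * ρ) := fun _ hy => hy.2

theorem le_dist_of_mem_dyadicAnnulus {x₀ x y : X} {r : ℝ} {k : ℕ} (hx : x ∈ ball x₀ r)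
    (hy : y ∈ dyadicAnnulus x₀ (2 * r) k) : 2 ^ k * r ≤ dist x y := by
  have hy' : 2 ^ k * (2 * r) ≤ dist y x₀ := hy.1
  have hxr : dist x x₀ < r := hx
  have hr : r ≤ 2 ^ k * r :=
    le_mul_of_one_le_left (dist_nonneg.trans hxr.le) (one_le_pow₀ one_le_two)
  linarith [dist_triangle y x x₀, dist_comm x y]

end Annulus

section Kernel

variable {E : Type*} [SeminormedAddCommGroup E] [MeasurableSpace E] [OpensMeasurableSpace E]
  {μ : Measure E} {F : E → ℝ} {x₀ x : E} {r s K : ℝ}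

theorem setIntegral_dyadicAnnulus_kernel_le (hF0 : ∀ y, 0 ≤ F y) (hs : 0 ≤ s)
    (hx : x ∈ ball x₀ r) (hFint : ∀ R > 0, IntegrableOn F (ball x₀ R) μ)
    (hFball : ∀ R > 0, ∫ y in ball x₀ R, F y ∂μ ≤ K * R ^ s) (k : ℕ) :
    ∫ y in dyadicAnnulus x₀ (2 * r) k, ‖x - y‖ ^ (-s) * (r ^ 2 / ‖x - y‖ ^ 2) * F y ∂μ
      ≤ K * 4 ^ s * (1 / 4) ^ k := by
  have hr : 0 < r := dist_nonneg.trans_lt hx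
  set t : ℝ := 2 ^ k * r with ht_def
  have ht : 0 < t := by positivity
  have h4t : 2 ^ (k + 1) * (2 * r) = 4 * t := by ring
  have hkernel : ∀ y ∈ dyadicAnnulus x₀ (2 * r) k,
      ‖x - y‖ ^ (-s) * (r ^ 2 / ‖x - y‖ ^ 2) * F y ≤ t ^ (-s) * (r ^ 2 / t ^ 2) * F y := by
    intro y hy
    have hty : t ≤ ‖x - y‖ := by
      simpa [dist_eq_norm] using le_dist_of_mem_dyadicAnnulus hx hy
    have hpow : ‖x - y‖ ^ (-s) ≤ t ^ (-s) := rpow_le_rpow_of_nonpos ht hty (neg_nonpos.2 hs)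
    exact mul_le_mul_of_nonneg_right
      (mul_le_mul hpow (by gcongr) (by positivity) (by positivity)) (hF0 y)
  have hFA : IntegrableOn F (dyadicAnnulus x₀ (2 * r) k) μ :=
    (hFint (4 * t) (by positivity)).mono_set (h4t ▸ dyadicAnnulus_subset_ball _ _ _)
  calc ∫ y in dyadicAnnulus x₀ (2 * r) k, ‖x - y‖ ^ (-s) * (r ^ 2 / ‖x - y‖ ^ 2) * F y ∂μ
      ≤ ∫ y in dyadicAnnulus x₀ (2 * r) k, t ^ (-s) * (r ^ 2 / t ^ 2) * F y ∂μ :=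
        integral_mono_of_nonneg (.of_forall fun y => mul_nonneg (by positivity) (hF0 y))
          (hFA.const_mul _)
          ((ae_restrict_iff' (measurableSet_dyadicAnnulus _ _ _)).2 (.of_forall hkernel))
    _ = t ^ (-s) * (r ^ 2 / t ^ 2) * ∫ y in dyadicAnnulus x₀ (2 * r) k, F y ∂μ :=
        integral_const_mul _ _
    _ ≤ t ^ (-s) * (r ^ 2 / t ^ 2) * ∫ y in ball x₀ (4 * t), F y ∂μ :=
        mul_le_mul_of_nonneg_left (setIntegral_mono_set (hFint _ (by positivity))
          (.of_forall hF0) (h4t ▸ dyadicAnnulus_subset_ball _ _ _).eventuallyLE) (by positivity)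
    _ ≤ t ^ (-s) * (r ^ 2 / t ^ 2) * (K * (4 * t) ^ s) := by
        gcongr
        exact hFball _ (by positivity)
    _ = K * 4 ^ s * (1 / 4) ^ k := by
        have hrt : r ^ 2 / t ^ 2 = (1 / 4) ^ k := by
          rw [ht_def, mul_pow, ← pow_mul, mul_comm k, pow_mul, one_div_pow]
          field_simp
          norm_num
        rw [hrt, mul_rpow (by norm_num) ht.le, rpow_neg ht.le]
        field_simp

theorem setIntegral_compl_ball_kernel_le (hF0 : ∀ y, 0 ≤ F y) (hs : 0 ≤ s)
    (hx : x ∈ ball x₀ r) (hFint : ∀ R > 0, IntegrableOn F (ball x₀ R) μ)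
    (hFball : ∀ R > 0, ∫ y in ball x₀ R, F y ∂μ ≤ K * R ^ s) :
    ∫ y in (ball x₀ (2 * r))ᶜ, ‖x - y‖ ^ (-s) * (r ^ 2 / ‖x - y‖ ^ 2) * F y ∂μ
      ≤ K * 4 ^ s * (4 / 3) := by
  have hr : 0 < r := dist_nonneg.trans_lt hx
  have hgeom :=
    (hasSum_geometric_of_lt_one (r := (1 / 4 : ℝ)) (by norm_num) (by norm_num)).mul_left (K * 4 ^ s)
  rw [show (1 - 1 / 4 : ℝ)⁻¹ = 4 / 3 by norm_num] at hgeom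
  rw [← iUnion_dyadicAnnulus x₀ (by positivity : 0 < 2 * r), ← hgeom.tsum_eq]
  exact setIntegral_iUnion_le_tsum (measurableSet_dyadicAnnulus _ _)
    (pairwise_disjoint_dyadicAnnulus _ (by positivity))
    (fun y => mul_nonneg (by positivity) (hF0 y)) hgeom.summable
    (setIntegral_dyadicAnnulus_kernel_le hF0 hs hx hFint hFball)

end Kernel

theorem measureReal_ball_pos {X : Type*} [PseudoMetricSpace X] [ProperSpace X]
    [MeasurableSpace X] (μ : Measure X) [μ.IsOpenPosMeasure] [IsFiniteMeasureOnCompacts μ]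
    (x : X) {R : ℝ} (hR : 0 < R) : 0 < μ.real (ball x R) :=
  ENNReal.toReal_pos (measure_ball_pos μ x hR).ne' measure_ball_lt_top.ne

section Haar

variable {E : Type*} [NormedAddCommGroup E] [NormedSpace ℝ E] [FiniteDimensional ℝ E]
  [MeasurableSpace E] [BorelSpace E] (μ : Measure E) [μ.IsAddHaarMeasure]

theorem measureReal_ball_rpow_one_sub_div (hd : finrank ℝ E ≠ 0) (x : E) {R : ℝ} (hR : 0 < R)
    (α : ℝ) : μ.real (ball x R) ^ (1 - α / finrank ℝ E)
      = μ.real (ball (0 : E) 1) ^ (1 - α / finrank ℝ E) * R ^ ((finrank ℝ E : ℝ) - α) := by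
  rw [measureReal_def, Measure.addHaar_ball_of_pos μ x hR, ENNReal.toReal_mul,
    ENNReal.toReal_ofReal (by positivity), ← measureReal_def,
    mul_rpow (by positivity) measureReal_nonneg, ← rpow_natCast, ← rpow_mul hR.le, mul_comm]
  congr 2
  field_simp

theorem setIntegral_ball_le_of_morrey (hd : finrank ℝ E ≠ 0) {F : E → ℝ} (hF0 : ∀ y, 0 ≤ F y)
    {p α lam M : ℝ} (hp : 1 ≤ p) (hlam : lam = finrank ℝ E - α * p) {c : E} {R : ℝ} (hR : 0 < R)
    (hFp : IntegrableOn (fun y => F y ^ p) (ball c R) μ)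
    (hM : μ.real (ball c R) ^ (-(lam / (p * finrank ℝ E))) *
      (∫ y in ball c R, F y ^ p ∂μ) ^ (1 / p) ≤ M) :
    ∫ y in ball c R, F y ∂μ
      ≤ M * μ.real (ball (0 : E) 1) ^ (1 - α / finrank ℝ E) * R ^ ((finrank ℝ E : ℝ) - α) := by
  have hexp : lam / (p * finrank ℝ E) + 1 - 1 / p = 1 - α / finrank ℝ E := by
    have : (finrank ℝ E : ℝ) ≠ 0 := by exact_mod_cast hd
    subst hlam
    field_simp
    ring
  have := setIntegral_le_mul_measureReal_rpow_of_rpow_bound (measureReal_ball_pos μ c hR) hF0 hp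
    hFp hM
  rwa [hexp, measureReal_ball_rpow_one_sub_div μ hd c hR, ← mul_assoc] at this

end Haar

theorem stmt_11_general (n : ℕ) (hn : 1 ≤ n) (α p lam C : ℝ) (hαn : α < n)
    (hp1 : 1 ≤ p) (hlam : lam = n - α * p) (hC : 0 < C) :
    ∃ C' > (0 : ℝ), ∀ (f g : EuclideanSpace ℝ (Fin n) → ℝ) (M : ℝ),
      (∀ (x₀ : EuclideanSpace ℝ (Fin n)) (r : ℝ), 0 < r →
        IntegrableOn (fun y => |f y| ^ p) (ball x₀ r) volume ∧
        (volume (ball x₀ r)).toReal ^ (-(lam / (p * n))) *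
          (∫ y in ball x₀ r, |f y| ^ p) ^ (1 / p) ≤ M) →
      ∀ (x₀ : EuclideanSpace ℝ (Fin n)) (r : ℝ), 0 < r →
        (∀ x ∈ ball x₀ r, |g x| ≤
          C * ∫ y in (ball x₀ (2 * r))ᶜ,
            ‖x - y‖ ^ (-((n : ℝ) - α)) * (r ^ 2 / ‖x - y‖ ^ 2) * |f y|) →
        (volume (ball x₀ r)).toReal⁻¹ * ∫ x in ball x₀ r, |g x| ≤ C' * M := by
  have hdim : finrank ℝ (EuclideanSpace ℝ (Fin n)) = n := finrank_euclideanSpace_fin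
  set V := volume.real (ball (0 : EuclideanSpace ℝ (Fin n)) 1)
  have hV : 0 < V := measureReal_ball_pos volume 0 one_pos
  refine ⟨C * (V ^ (1 - α / n) * 4 ^ ((n : ℝ) - α) * (4 / 3)), by positivity, ?_⟩
  intro f g M hM x₀ r hr hg
  have hball (R : ℝ) (hR : 0 < R) :
      ∫ y in ball x₀ R, |f y| ≤ M * V ^ (1 - α / n) * R ^ ((n : ℝ) - α) := by
    simpa only [hdim] using setIntegral_ball_le_of_morrey volume (lam := lam) (by omega)
      (fun y => abs_nonneg _) hp1 (by rw [hdim]; exact hlam) hR (hM x₀ R hR).1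
      (by simpa only [hdim, measureReal_def] using (hM x₀ R hR).2)
  have hint (R : ℝ) (hR : 0 < R) : IntegrableOn (fun y => |f y|) (ball x₀ R) :=
    integrableOn_of_integrableOn_rpow measure_ball_lt_top.ne (fun y => abs_nonneg _) hp1
      (hM x₀ R hR).1
  have hgx (x : EuclideanSpace ℝ (Fin n)) (hx : x ∈ ball x₀ r) :
      ‖|g x|‖ ≤ C * (M * V ^ (1 - α / n) * 4 ^ ((n : ℝ) - α) * (4 / 3)) := by
    rw [norm_abs_eq_norm, Real.norm_eq_abs]
    exact (hg x hx).trans <| mul_le_mul_of_nonneg_left (setIntegral_compl_ball_kernel_le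
      (fun y => abs_nonneg _) (sub_nonneg.2 hαn.le) hx hint hball) hC.le
  calc (volume (ball x₀ r)).toReal⁻¹ * ∫ x in ball x₀ r, |g x|
      ≤ C * (M * V ^ (1 - α / n) * 4 ^ ((n : ℝ) - α) * (4 / 3)) :=
        inv_measureReal_mul_setIntegral_le_of_norm_le (measureReal_ball_pos volume x₀ hr) hgx
    _ = C * (V ^ (1 - α / n) * 4 ^ ((n : ℝ) - α) * (4 / 3)) * M := by ring

theorem stmt_11 (n : ℕ) (hn : 1 ≤ n) (α p lam C : ℝ) (hα : 0 < α) (hαn : α < n)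
    (hp1 : 1 ≤ p) (hp2 : p < n / α) (hlam : lam = n - α * p) (hC : 0 < C) :
    ∃ C' > (0 : ℝ), ∀ (f g : EuclideanSpace ℝ (Fin n) → ℝ) (M : ℝ),
      (∀ (x₀ : EuclideanSpace ℝ (Fin n)) (r : ℝ), 0 < r →
        IntegrableOn (fun y => |f y| ^ p) (ball x₀ r) volume ∧
        (volume (ball x₀ r)).toReal ^ (-(lam / (p * n))) *
          (∫ y in ball x₀ r, |f y| ^ p) ^ (1 / p) ≤ M) →
      ∀ (x₀ : EuclideanSpace ℝ (Fin n)) (r : ℝ), 0 < r →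
        (∀ x ∈ ball x₀ r, |g x| ≤
          C * ∫ y in (ball x₀ (2 * r))ᶜ,
            ‖x - y‖ ^ (-((n : ℝ) - α)) * (r ^ 2 / ‖x - y‖ ^ 2) * |f y|) →
        (volume (ball x₀ r)).toReal⁻¹ * ∫ x in ball x₀ r, |g x| ≤ C' * M :=
  stmt_11_general n hn α p lam C hαn hp1 hlam hC
end

section
/- Let 0 < α < n, 1 ≤ p < n/α, λ = n - αp, and f ∈ M^{p,λ}(ℝⁿ). For any ball B = B(x₀, r), (1/m(B)) ∫_B ∫_{2B} |f(y)| / |x-y|^{n-α} dy dx ≤ C ‖f‖_{M^{p,λ}}, with C depending only on n, p, α. -/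
/-!
Swap the order of integration. For `y ∈ 2B` the ball `B` lies in `B(y, 3r)`, and polar
coordinates give `∫_{B(y,R)} |x - y|^(α-n) dx = n ω_n R^α / α`, so the double integral is at most
`n ω_n (3r)^α / α · ∫_{2B} |f|`. Hölder's inequality bounds `∫_{2B} |f|` by
`‖f‖_{L^p(2B)} m(2B)^(1-1/p)`, and the Morrey condition on `2B` bounds this by
`M m(2B)^(λ/(pn) + 1 - 1/p) = M m(2B)^(1 - α/n)`. As `m(B) = ω_n r^n` and `m(2B) = ω_n (2r)^n`,
dividing by `m(B)` leaves `C = n ω_n^(1-α/n) 3^α 2^(n-α) / α`.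
-/

open MeasureTheory Set Real Metric

theorem aestronglyMeasurable_abs_of_rpow {X : Type*} [MeasurableSpace X] {μ : Measure X}
    {f : X → ℝ} {p : ℝ} (hp : p ≠ 0) (h : AEStronglyMeasurable (fun x => |f x| ^ p) μ) :
    AEStronglyMeasurable (fun x => |f x|) μ := by
  have hroot : (fun x => (|f x| ^ p) ^ p⁻¹) = fun x => |f x| := funext fun x => by
    rw [← rpow_mul (abs_nonneg _), mul_inv_cancel₀ hp, rpow_one]
  exact hroot ▸ (h.aemeasurable.pow_const _).aestronglyMeasurable

theorem setLIntegral_ofReal_abs_le_integral_rpow_mul {X : Type*} [MeasurableSpace X]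
    {μ : Measure X} {s : Set X} {f : X → ℝ} {p : ℝ} (hp : 1 ≤ p)
    (hf : IntegrableOn (fun x => |f x| ^ p) s μ) :
    ∫⁻ x in s, ENNReal.ofReal |f x| ∂μ ≤
      ENNReal.ofReal ((∫ x in s, |f x| ^ p ∂μ) ^ (1 / p)) * μ s ^ (1 - 1 / p) := by
  have hp0 : 0 < p := zero_lt_one.trans_le hp
  have hmeas := aestronglyMeasurable_abs_of_rpow hp0.ne' hf.aestronglyMeasurable
  have h := eLpNorm_le_eLpNorm_mul_rpow_measure_univ (ENNReal.one_le_ofReal.mpr hp) hmeas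
  rw [eLpNorm_one_eq_lintegral_enorm, eLpNorm_eq_lintegral_rpow_enorm_toReal
      (ENNReal.ofReal_pos.mpr hp0).ne' ENNReal.ofReal_ne_top, Measure.restrict_apply_univ] at h
  simp only [ENNReal.toReal_ofReal hp0.le, ENNReal.toReal_one, one_div_one,
    enorm_eq_ofReal_abs, abs_abs] at h
  rwa [lintegral_congr fun x => ENNReal.ofReal_rpow_of_nonneg (abs_nonneg (f x)) hp0.le,
    ← ofReal_integral_eq_lintegral_ofReal hf (ae_of_all _ fun x => by positivity),
    ENNReal.ofReal_rpow_of_nonneg (integral_nonneg fun x => by positivity) (by positivity)] at h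

theorem integral_integral_le_of_lintegral_lintegral_enorm_le {X Y : Type*} [MeasurableSpace X]
    [MeasurableSpace Y] {μ : Measure X} {ν : Measure Y} {F : X → Y → ℝ} {c : ℝ} (hc : 0 ≤ c)
    (h : ∫⁻ x, ∫⁻ y, ‖F x y‖ₑ ∂ν ∂μ ≤ ENNReal.ofReal c) :
    ∫ x, ∫ y, F x y ∂ν ∂μ ≤ c := by
  have henorm : ‖∫ x, ∫ y, F x y ∂ν ∂μ‖ₑ ≤ ENNReal.ofReal c :=
    (enorm_integral_le_lintegral_enorm _).trans
      ((lintegral_mono fun x => enorm_integral_le_lintegral_enorm _).trans h)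
  rw [← ofReal_norm, ENNReal.ofReal_le_ofReal_iff hc] at henorm
  exact (le_norm_self _).trans henorm

theorem rpow_one_div_mul_rpow_le_of_morrey {m I M α p lam d : ℝ} (hm : 0 < m) (hp : p ≠ 0)
    (hd : d ≠ 0) (hlam : lam = d - α * p) (h : m ^ (-(lam / (p * d))) * I ^ (1 / p) ≤ M) :
    I ^ (1 / p) * m ^ (1 - 1 / p) ≤ M * m ^ (1 - α / d) := by
  have hexp : 1 - 1 / p = -(lam / (p * d)) + (1 - α / d) := by
    rw [hlam]; field_simp; ring
  calc I ^ (1 / p) * m ^ (1 - 1 / p) = m ^ (-(lam / (p * d))) * I ^ (1 / p) * m ^ (1 - α / d) := by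
        rw [hexp, rpow_add hm]; ring
    _ ≤ M * m ^ (1 - α / d) := by gcongr

section AddHaar

variable {E : Type*} [NormedAddCommGroup E] [NormedSpace ℝ E] [FiniteDimensional ℝ E]
  [Nontrivial E] [MeasurableSpace E] [BorelSpace E] (μ : Measure E) [μ.IsAddHaarMeasure]

theorem addHaar_real_ball (x : E) {r : ℝ} (hr : 0 ≤ r) :
    μ.real (ball x r) = r ^ Module.finrank ℝ E * μ.real (ball 0 1) := by
  rw [← Measure.addHaar_real_closedBall_eq_addHaar_real_ball,
    Measure.addHaar_real_closedBall _ _ hr]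

theorem integral_ball_zero_norm_rpow {α R : ℝ} (hα : 0 < α) (hR : 0 ≤ R) :
    ∫ x in ball (0 : E) R, ‖x‖ ^ (α - Module.finrank ℝ E) ∂μ =
      Module.finrank ℝ E * μ.real (ball 0 1) * R ^ α / α := by
  set d := Module.finrank ℝ E
  have hradial : ∫ y in Ioi (0 : ℝ), y ^ (d - 1) • (Iio R).indicator (· ^ (α - d)) y =
      R ^ α / α := by
    calc ∫ y in Ioi (0 : ℝ), y ^ (d - 1) • (Iio R).indicator (· ^ (α - d)) y
        = ∫ y in Ioi (0 : ℝ), (Iio R).indicator (· ^ (α - 1)) y := by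
          refine setIntegral_congr_fun measurableSet_Ioi fun y (hy : 0 < y) => ?_
          by_cases hyR : y ∈ Iio R
          · rw [indicator_of_mem hyR, indicator_of_mem hyR, smul_eq_mul, ← rpow_natCast,
              ← rpow_add hy, Nat.cast_sub Module.finrank_pos]
            congr 1; ring
          · simp [indicator_of_notMem hyR]
      _ = ∫ y in Ioo 0 R, y ^ (α - 1) := by
          rw [setIntegral_indicator measurableSet_Iio, Ioi_inter_Iio]
      _ = R ^ α / α := by
          rw [← integral_Ioc_eq_integral_Ioo, ← intervalIntegral.integral_of_le hR,
            integral_rpow (Or.inl (by linarith)), sub_add_cancel, zero_rpow hα.ne', sub_zero]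
  have hindicator : ∀ x : E, (ball 0 R).indicator (fun x => ‖x‖ ^ (α - d)) x =
      (Iio R).indicator (· ^ (α - d)) ‖x‖ := fun x => by
    rw [← indicator_comp_right, ball_zero_eq]
    rfl
  rw [← integral_indicator measurableSet_ball, funext hindicator, integral_fun_norm_addHaar μ,
    hradial, nsmul_eq_mul, smul_eq_mul]
  ring

theorem lintegral_ball_norm_sub_rpow {α R : ℝ} (hα : 0 < α) (hR : 0 ≤ R) (y : E) :
    ∫⁻ x in ball y R, ENNReal.ofReal (‖x - y‖ ^ (α - Module.finrank ℝ E)) ∂μ =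
      ENNReal.ofReal (Module.finrank ℝ E * μ.real (ball 0 1) * R ^ α / α) := by
  set d := Module.finrank ℝ E
  have hpre : (· - y) ⁻¹' ball (0 : E) R = ball y R := by
    ext x
    simp [dist_eq_norm]
  have hint : IntegrableOn (fun x : E => ‖x‖ ^ (α - d)) (ball 0 R) μ := by
    refine integrableOn_ball_of_norm_le_rpow (C := 1) Module.finrank_pos
      (sub_lt_self _ hα) (ae_of_all _ fun x => ?_)
      (measurable_norm.pow_const _).aestronglyMeasurable
    rw [one_mul, neg_sub, norm_of_nonneg (rpow_nonneg (norm_nonneg x) _)]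
  rw [← hpre, (measurePreserving_sub_right μ y).setLIntegral_comp_preimage measurableSet_ball
      (f := fun z => ENNReal.ofReal (‖z‖ ^ (α - d))) (by fun_prop),
    ← integral_ball_zero_norm_rpow μ hα hR,
    ofReal_integral_eq_lintegral_ofReal hint (ae_of_all _ fun x => rpow_nonneg (norm_nonneg x) _)]

theorem lintegral_ball_lintegral_ball_mul_rpow_le {α r ρ : ℝ} (hα : 0 < α)
    (hr : 0 ≤ r) (x₀ : E) {g : E → ENNReal} (hg : AEMeasurable g (μ.restrict (ball x₀ ρ))) :
    ∫⁻ x in ball x₀ r, ∫⁻ y in ball x₀ ρ,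
        g y * ENNReal.ofReal (‖x - y‖ ^ (α - Module.finrank ℝ E)) ∂μ ∂μ ≤
      ENNReal.ofReal (Module.finrank ℝ E * μ.real (ball 0 1) * (r + ρ) ^ α / α) *
        ∫⁻ y in ball x₀ ρ, g y ∂μ := by
  set d := Module.finrank ℝ E
  have hkernel : Measurable fun z : E × E => ENNReal.ofReal (‖z.1 - z.2‖ ^ (α - d)) := by
    fun_prop
  rw [lintegral_lintegral_swap (hg.comp_snd.mul hkernel.aemeasurable), ← lintegral_const_mul'' _ hg]
  refine setLIntegral_mono' measurableSet_ball fun y (hy : dist y x₀ < ρ) => ?_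
  have hsub : ball x₀ r ⊆ ball y (r + ρ) := ball_subset_ball' (by rw [dist_comm]; linarith)
  calc ∫⁻ x in ball x₀ r, g y * ENNReal.ofReal (‖x - y‖ ^ (α - d)) ∂μ
      = g y * ∫⁻ x in ball x₀ r, ENNReal.ofReal (‖x - y‖ ^ (α - d)) ∂μ :=
        lintegral_const_mul _ (by fun_prop)
    _ ≤ g y * ∫⁻ x in ball y (r + ρ), ENNReal.ofReal (‖x - y‖ ^ (α - d)) ∂μ := by
        gcongr
    _ = _ := by
        rw [lintegral_ball_norm_sub_rpow μ hα (by linarith [dist_nonneg.trans_lt hy]), mul_comm]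

theorem setIntegral_ball_setIntegral_ball_div_rpow_le {α p r ρ : ℝ} (hα : 0 < α)
    (hp : 1 ≤ p) (hr : 0 ≤ r) (hρ : 0 ≤ ρ) (x₀ : E) {f : E → ℝ}
    (hf : IntegrableOn (fun y => |f y| ^ p) (ball x₀ ρ) μ) :
    ∫ x in ball x₀ r, ∫ y in ball x₀ ρ, |f y| / ‖x - y‖ ^ (Module.finrank ℝ E - α) ∂μ ∂μ ≤
      Module.finrank ℝ E * μ.real (ball 0 1) * (r + ρ) ^ α / α *
        ((∫ y in ball x₀ ρ, |f y| ^ p ∂μ) ^ (1 / p) * μ.real (ball x₀ ρ) ^ (1 - 1 / p)) := by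
  set d := Module.finrank ℝ E
  have hp0 : 0 < p := zero_lt_one.trans_le hp
  have hfm : AEMeasurable (fun y => ENNReal.ofReal |f y|) (μ.restrict (ball x₀ ρ)) :=
    (aestronglyMeasurable_abs_of_rpow hp0.ne' hf.aestronglyMeasurable).aemeasurable.ennreal_ofReal
  refine integral_integral_le_of_lintegral_lintegral_enorm_le (by positivity) ?_
  have hintegrand : ∀ x y : E, ‖|f y| / ‖x - y‖ ^ ((d : ℝ) - α)‖ₑ =
      ENNReal.ofReal |f y| * ENNReal.ofReal (‖x - y‖ ^ (α - d)) := fun x y => by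
    rw [enorm_eq_ofReal (by positivity), ← ENNReal.ofReal_mul (abs_nonneg _), div_eq_mul_inv,
      ← rpow_neg (norm_nonneg _), neg_sub]
  simp only [hintegrand]
  calc ∫⁻ x in ball x₀ r, ∫⁻ y in ball x₀ ρ,
          ENNReal.ofReal |f y| * ENNReal.ofReal (‖x - y‖ ^ (α - d)) ∂μ ∂μ
      ≤ ENNReal.ofReal (d * μ.real (ball 0 1) * (r + ρ) ^ α / α) *
          ∫⁻ y in ball x₀ ρ, ENNReal.ofReal |f y| ∂μ :=
        lintegral_ball_lintegral_ball_mul_rpow_le μ hα hr x₀ hfm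
    _ ≤ ENNReal.ofReal (d * μ.real (ball 0 1) * (r + ρ) ^ α / α) *
          (ENNReal.ofReal ((∫ y in ball x₀ ρ, |f y| ^ p ∂μ) ^ (1 / p)) *
            μ (ball x₀ ρ) ^ (1 - 1 / p)) := by
        gcongr
        exact setLIntegral_ofReal_abs_le_integral_rpow_mul hp hf
    _ = _ := by
        rw [← ofReal_measureReal measure_ball_lt_top.ne, ENNReal.ofReal_rpow_of_nonneg
          measureReal_nonneg (sub_nonneg.mpr ((div_le_one hp0).mpr hp)), ← ENNReal.ofReal_mul
          (by positivity), ← ENNReal.ofReal_mul (by positivity)]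

end AddHaar

theorem stmt_12_general (n : ℕ) (hn : 1 ≤ n) (α p lam : ℝ) (hα : 0 < α)
    (hp1 : 1 ≤ p) (hlam : lam = n - α * p) :
    ∃ C > (0 : ℝ), ∀ (f : EuclideanSpace ℝ (Fin n) → ℝ) (M : ℝ),
      (∀ (x₀ : EuclideanSpace ℝ (Fin n)) (r : ℝ), 0 < r →
        IntegrableOn (fun y => |f y| ^ p) (ball x₀ r) volume ∧
        (volume (ball x₀ r)).toReal ^ (-(lam / (p * n))) *
          (∫ y in ball x₀ r, |f y| ^ p) ^ (1 / p) ≤ M) →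
      ∀ (x₀ : EuclideanSpace ℝ (Fin n)) (r : ℝ), 0 < r →
        (volume (ball x₀ r)).toReal⁻¹ *
            ∫ x in ball x₀ r, ∫ y in ball x₀ (2 * r),
              |f y| / ‖x - y‖ ^ ((n : ℝ) - α) ≤ C * M := by
  have : Nontrivial (EuclideanSpace ℝ (Fin n)) :=
    Module.nontrivial_of_finrank_pos (R := ℝ) (by rw [finrank_euclideanSpace_fin]; omega)
  have hn0 : (n : ℝ) ≠ 0 := by positivity
  set ω := volume.real (ball (0 : EuclideanSpace ℝ (Fin n)) 1)
  have hω : 0 < ω := ENNReal.toReal_pos (measure_ball_pos _ _ one_pos).ne' measure_ball_lt_top.ne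
  have hvol (x₀ : EuclideanSpace ℝ (Fin n)) {ρ : ℝ} (hρ : 0 ≤ ρ) :
      volume.real (ball x₀ ρ) = ρ ^ n * ω := by
    rw [addHaar_real_ball _ _ hρ, finrank_euclideanSpace_fin]
  refine ⟨n * ω ^ (1 - α / n) * 3 ^ α * 2 ^ ((n : ℝ) - α) / α, by positivity,
    fun f M hf x₀ r hr => ?_⟩
  obtain ⟨hint, hmorrey⟩ := hf x₀ (2 * r) (by positivity)
  rw [← measureReal_def, hvol x₀ (by positivity)] at hmorrey
  have hriesz := setIntegral_ball_setIntegral_ball_div_rpow_le volume hα hp1 hr.le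
    (by positivity) x₀ hint
  rw [finrank_euclideanSpace_fin, hvol x₀ (by positivity), show r + 2 * r = 3 * r by ring] at hriesz
  have hmorrey_holder := rpow_one_div_mul_rpow_le_of_morrey (by positivity)
    (zero_lt_one.trans_le hp1).ne' hn0 hlam hmorrey
  have hr' : r ^ α * r ^ ((n : ℝ) - α) = r ^ n := by
    rw [← rpow_add hr, add_sub_cancel, rpow_natCast]
  calc (volume (ball x₀ r)).toReal⁻¹ * _
      ≤ (r ^ n * ω)⁻¹ * (n * ω * (3 * r) ^ α / α * (M * ((2 * r) ^ n * ω) ^ (1 - α / n))) := by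
        rw [← measureReal_def, hvol x₀ hr.le]
        gcongr
        exact hriesz.trans (mul_le_mul_of_nonneg_left hmorrey_holder (by positivity))
    _ = n * ω ^ (1 - α / n) * 3 ^ α * 2 ^ ((n : ℝ) - α) / α * M := by
        rw [mul_rpow (by positivity) hω.le, ← rpow_natCast (2 * r), ← rpow_mul (by positivity),
          show (n : ℝ) * (1 - α / n) = n - α by field_simp, mul_rpow (by norm_num) hr.le,
          mul_rpow (by norm_num) hr.le, ← hr']
        field_simp

theorem stmt_12 (n : ℕ) (hn : 1 ≤ n) (α p lam : ℝ) (hα : 0 < α) (hαn : α < n)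
    (hp1 : 1 ≤ p) (hp2 : p < n / α) (hlam : lam = n - α * p) :
    ∃ C > (0 : ℝ), ∀ (f : EuclideanSpace ℝ (Fin n) → ℝ) (M : ℝ),
      (∀ (x₀ : EuclideanSpace ℝ (Fin n)) (r : ℝ), 0 < r →
        IntegrableOn (fun y => |f y| ^ p) (ball x₀ r) volume ∧
        (volume (ball x₀ r)).toReal ^ (-(lam / (p * n))) *
          (∫ y in ball x₀ r, |f y| ^ p) ^ (1 / p) ≤ M) →
      ∀ (x₀ : EuclideanSpace ℝ (Fin n)) (r : ℝ), 0 < r →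
        (volume (ball x₀ r)).toReal⁻¹ *
            ∫ x in ball x₀ r, ∫ y in ball x₀ (2 * r),
              |f y| / ‖x - y‖ ^ ((n : ℝ) - α) ≤ C * M :=
  stmt_12_general n hn α p lam hα hp1 hlam
end

section
/- Let 1 ≤ p < ∞, 0 < λ < n, and f a locally p-integrable function on ℝⁿ. Suppose the quantity η(r) := sup_{x₀} m(B(x₀,r))^{-λ/(pn)} (∫_{B(x₀,r)} |f|^p)^{1/p} satisfies that s ↦ ‖f‖_{L^p(B(x₀,s))} is increasing in s for each x₀ (which is automatic). Then for any r > 0 and any β > 0, r^β ∫_{2r}^∞ ‖f‖_{L^p(B(x₀,s))} s^{-(λ/p + β + 1)} ds ≤ C ∫_1^∞ η(2rτ) τ^{-(β+1)} dτ, and if f ∈ VM^{p,λ}(ℝⁿ) then this quantity tends to 0 as r → 0⁺, uniformly in x₀. -/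
/-!
With `|B₁|` the volume of the unit ball, the definition of `η` gives
`‖f‖_{L^p(B(x₀,s))} ≤ |B₁|^{λ/(pn)} s^{λ/p} η(s)`, so the weight `s^{λ/p}` cancels and the
substitution `s = 2rτ` turns `r^β ∫_{2r}^∞ η(s) s^{-(β+1)} ds` into
`2^{-β} ∫_1^∞ η(2rτ) τ^{-(β+1)} dτ`. For the vanishing limit, `η` need not be measurable, so instead
of dominated convergence we split `∫_1^∞` at a large `T`: the tail is at most `M T^{-β}/β`, and on
`(1, T]` the integrand is small as soon as `2rT` is.
-/

open MeasureTheory Set Real Metric Filter Module Topology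
open scoped ENNReal

lemma le_measure_ball_rpow_mul_of_rpow_neg_mul_le {E : Type*} [NormedAddCommGroup E]
    [NormedSpace ℝ E] [MeasurableSpace E] [BorelSpace E] [FiniteDimensional ℝ E]
    (μ : Measure E) [μ.IsAddHaarMeasure] (x : E) {s a : ℝ} (hs : 0 < s) {I e : ℝ≥0∞}
    (h : μ (ball x s) ^ (-a) * I ≤ e) :
    I ≤ μ (ball 0 1) ^ a * ENNReal.ofReal (s ^ (finrank ℝ E * a)) * e := by
  have hball₀ : μ (ball x s) ≠ 0 := (measure_ball_pos μ x hs).ne'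
  have hball_top : μ (ball x s) ≠ ⊤ := measure_ball_lt_top.ne
  have hvol : μ (ball x s) ^ a = μ (ball 0 1) ^ a * ENNReal.ofReal (s ^ (finrank ℝ E * a)) := by
    rw [Measure.addHaar_ball_of_pos μ x hs, mul_comm,
      ENNReal.mul_rpow_of_ne_zero (measure_ball_pos μ 0 one_pos).ne'
        (by simpa using pow_pos hs _),
      ENNReal.ofReal_rpow_of_pos (by positivity), ← rpow_natCast, ← rpow_mul hs.le]
  calc I = μ (ball x s) ^ a * (μ (ball x s) ^ (-a) * I) := by
        rw [← mul_assoc, ← ENNReal.rpow_add _ _ hball₀ hball_top, add_neg_cancel,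
          ENNReal.rpow_zero, one_mul]
    _ ≤ μ (ball x s) ^ a * e := by gcongr
    _ = _ := by rw [hvol]

lemma lintegral_Ioi_comp_const_mul {c : ℝ} (hc : 0 < c) (g : ℝ → ℝ≥0∞) :
    ∫⁻ s in Ioi c, g s = ENNReal.ofReal c * ∫⁻ τ in Ioi 1, g (c * τ) := by
  let e := (Homeomorph.mulLeft₀ c hc.ne').toMeasurableEquiv
  have hvol : (volume : Measure ℝ) = ENNReal.ofReal c • Measure.map e volume := by
    have h := Real.smul_map_volume_mul_left hc.ne'
    rw [abs_of_pos hc] at h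
    exact h.symm
  have hpre : e ⁻¹' Ioi c = Ioi 1 := by
    rw [← div_self hc.ne']
    exact preimage_const_mul_Ioi₀ c hc
  conv_lhs => rw [hvol]
  rw [Measure.restrict_smul, lintegral_smul_measure, e.restrict_map, lintegral_map_equiv, hpre,
    smul_eq_mul]
  rfl

lemma ofReal_rpow_mul_lintegral_Ioi_eq_lintegral_Ioi_one {c : ℝ} (hc : 0 < c) (g : ℝ → ℝ≥0∞)
    (β : ℝ) :
    ENNReal.ofReal (c ^ β) * ∫⁻ s in Ioi c, g s * ENNReal.ofReal (s ^ (-(β + 1))) =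
      ∫⁻ τ in Ioi 1, g (c * τ) * ENNReal.ofReal (τ ^ (-(β + 1))) := by
  rw [lintegral_Ioi_comp_const_mul hc, ← mul_assoc, ← lintegral_const_mul' _ _
    (ENNReal.mul_ne_top ENNReal.ofReal_ne_top ENNReal.ofReal_ne_top)]
  refine setLIntegral_congr_fun measurableSet_Ioi fun τ hτ => ?_
  have hτ : 0 < τ := one_pos.trans hτ
  have hscale : c ^ β * c * (c * τ) ^ (-(β + 1)) = τ ^ (-(β + 1)) := by
    rw [mul_rpow hc.le hτ.le, ← rpow_add_one hc.ne', ← mul_assoc, ← rpow_add hc,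
      add_neg_cancel, rpow_zero, one_mul]
  rw [← ENNReal.ofReal_mul (by positivity), mul_left_comm, ← ENNReal.ofReal_mul (by positivity),
    hscale]

lemma ofReal_rpow_mul_lintegral_Ioi_le {F η : ℝ → ℝ≥0∞} {C : ℝ≥0∞} {b r c β : ℝ}
    (hC : C ≠ ⊤) (hF : ∀ s > 0, F s ≤ C * ENNReal.ofReal (s ^ b) * η s)
    (hr : 0 ≤ r) (hrc : r ≤ c) (hc : 0 < c) (hβ : 0 ≤ β) :
    ENNReal.ofReal (r ^ β) * ∫⁻ s in Ioi c, F s * ENNReal.ofReal (s ^ (-(b + β + 1))) ≤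
      C * ∫⁻ τ in Ioi 1, η (c * τ) * ENNReal.ofReal (τ ^ (-(β + 1))) := by
  have hpoint : ∀ s ∈ Ioi c, F s * ENNReal.ofReal (s ^ (-(b + β + 1))) ≤
      C * (η s * ENNReal.ofReal (s ^ (-(β + 1)))) := fun s hs => by
    have hs : 0 < s := hc.trans hs
    have hweight : ENNReal.ofReal (s ^ b) * ENNReal.ofReal (s ^ (-(b + β + 1))) =
        ENNReal.ofReal (s ^ (-(β + 1))) := by
      rw [← ENNReal.ofReal_mul (by positivity), ← rpow_add hs]
      ring_nf
    calc F s * ENNReal.ofReal (s ^ (-(b + β + 1)))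
        ≤ C * ENNReal.ofReal (s ^ b) * η s * ENNReal.ofReal (s ^ (-(b + β + 1))) := by
          gcongr; exact hF s hs
      _ = C * (η s * ENNReal.ofReal (s ^ (-(β + 1)))) := by rw [← hweight]; ring
  calc ENNReal.ofReal (r ^ β) * ∫⁻ s in Ioi c, F s * ENNReal.ofReal (s ^ (-(b + β + 1)))
      ≤ ENNReal.ofReal (c ^ β) * ∫⁻ s in Ioi c, C * (η s * ENNReal.ofReal (s ^ (-(β + 1)))) := by
        gcongr ?_ * ?_
        · exact ENNReal.ofReal_le_ofReal (rpow_le_rpow hr hrc hβ)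
        · exact setLIntegral_mono' measurableSet_Ioi hpoint
    _ = C * ∫⁻ τ in Ioi 1, η (c * τ) * ENNReal.ofReal (τ ^ (-(β + 1))) := by
        rw [lintegral_const_mul' _ _ hC, mul_left_comm,
          ofReal_rpow_mul_lintegral_Ioi_eq_lintegral_Ioi_one hc]

lemma lintegral_Ioi_rpow_neg {β c : ℝ} (hβ : 0 < β) (hc : 0 < c) :
    ∫⁻ τ in Ioi c, ENNReal.ofReal (τ ^ (-(β + 1))) = ENNReal.ofReal (c ^ (-β) / β) := by
  rw [← ofReal_integral_eq_lintegral_ofReal (integrableOn_Ioi_rpow_of_lt (by linarith) hc)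
      ((ae_restrict_iff' measurableSet_Ioi).2 (ae_of_all _ fun x hx =>
        rpow_nonneg (hc.trans hx).le _)),
    integral_Ioi_rpow_of_lt (by linarith) hc]
  ring_nf

lemma lintegral_Ioi_one_comp_mul_rpow_neg_le {h : ℝ → ℝ≥0∞} {M κ : ℝ≥0∞} {c T β : ℝ}
    (hβ : 0 < β) (hc : 0 < c) (hT : 1 ≤ T) (hM : ∀ s > 0, h s ≤ M)
    (hκ : ∀ s ∈ Ioc 0 (c * T), h s ≤ κ) :
    ∫⁻ τ in Ioi 1, h (c * τ) * ENNReal.ofReal (τ ^ (-(β + 1))) ≤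
      κ * ENNReal.ofReal (1 / β) + M * ENNReal.ofReal (T ^ (-β) / β) := by
  have hw : Measurable fun τ : ℝ => ENNReal.ofReal (τ ^ (-(β + 1))) := by fun_prop
  rw [← Ioc_union_Ioi_eq_Ioi hT, lintegral_union measurableSet_Ioi (Ioc_disjoint_Ioi le_rfl)]
  gcongr
  · calc ∫⁻ τ in Ioc 1 T, h (c * τ) * ENNReal.ofReal (τ ^ (-(β + 1)))
        ≤ ∫⁻ τ in Ioc 1 T, κ * ENNReal.ofReal (τ ^ (-(β + 1))) := by
          refine setLIntegral_mono' measurableSet_Ioc fun τ hτ => ?_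
          have hτ₀ : 0 < τ := one_pos.trans hτ.1
          gcongr
          exact hκ _ ⟨by positivity, by gcongr; exact hτ.2⟩
      _ ≤ κ * ∫⁻ τ in Ioi 1, ENNReal.ofReal (τ ^ (-(β + 1))) := by
          rw [lintegral_const_mul _ hw]
          gcongr
          exact Ioc_subset_Ioi_self
      _ = κ * ENNReal.ofReal (1 / β) := by rw [lintegral_Ioi_rpow_neg hβ one_pos, one_rpow]
  · calc ∫⁻ τ in Ioi T, h (c * τ) * ENNReal.ofReal (τ ^ (-(β + 1)))
        ≤ ∫⁻ τ in Ioi T, M * ENNReal.ofReal (τ ^ (-(β + 1))) := by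
          refine setLIntegral_mono' measurableSet_Ioi fun τ hτ => ?_
          have hτ₀ : 0 < τ := (one_pos.trans_le hT).trans hτ
          gcongr
          exact hM _ (by positivity)
      _ = M * ENNReal.ofReal (T ^ (-β) / β) := by
          rw [lintegral_const_mul _ hw, lintegral_Ioi_rpow_neg hβ (one_pos.trans_le hT)]

lemma tendsto_lintegral_Ioi_one_comp_mul_rpow_neg {h : ℝ → ℝ≥0∞} {M : ℝ≥0∞} (hM : M ≠ ⊤)
    (hhM : ∀ s > 0, h s ≤ M) (hh : Tendsto h (𝓝[>] 0) (𝓝 0)) {β : ℝ} (hβ : 0 < β) :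
    Tendsto (fun c => ∫⁻ τ in Ioi 1, h (c * τ) * ENNReal.ofReal (τ ^ (-(β + 1))))
      (𝓝[>] 0) (𝓝 0) := by
  rw [ENNReal.tendsto_nhds_zero]
  intro ε hε
  have hε₂ : 0 < ε / 2 := ENNReal.half_pos hε.ne'
  set K := ENNReal.ofReal (1 / β)
  have hK₀ : K ≠ 0 := (ENNReal.ofReal_pos.2 (by positivity)).ne'
  have hK_top : K ≠ ⊤ := ENNReal.ofReal_ne_top
  have htail : Tendsto (fun T : ℝ => M * ENNReal.ofReal (T ^ (-β) / β)) atTop (𝓝 0) := by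
    simpa using ENNReal.Tendsto.const_mul
      (ENNReal.tendsto_ofReal ((tendsto_rpow_neg_atTop hβ).div_const β)) (Or.inr hM)
  obtain ⟨T, hT_small, hT⟩ := ((htail.eventually_lt_const hε₂).and (eventually_ge_atTop 1)).exists
  obtain ⟨ρ, hρ, hρ_small⟩ := mem_nhdsGT_iff_exists_Ioo_subset.1
    (ENNReal.tendsto_nhds_zero.1 hh (ε / 2 / K) (ENNReal.div_pos hε₂.ne' hK_top))
  have hT₀ : 0 < T := one_pos.trans_le hT
  filter_upwards [Ioo_mem_nhdsGT (div_pos hρ hT₀)] with c hc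
  have hκ : ∀ s ∈ Ioc 0 (c * T), h s ≤ ε / 2 / K := fun s hs =>
    hρ_small ⟨hs.1, hs.2.trans_lt ((lt_div_iff₀ hT₀).1 hc.2)⟩
  calc ∫⁻ τ in Ioi 1, h (c * τ) * ENNReal.ofReal (τ ^ (-(β + 1)))
      ≤ ε / 2 / K * K + M * ENNReal.ofReal (T ^ (-β) / β) :=
        lintegral_Ioi_one_comp_mul_rpow_neg_le hβ hc.1 hT hhM hκ
    _ ≤ ε / 2 + ε / 2 := by
        rw [ENNReal.div_mul_cancel hK₀ hK_top]
        gcongr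
    _ = ε := ENNReal.add_halves ε

theorem stmt_13_general (n : ℕ) (hn : 1 ≤ n) (p lam : ℝ) (f : EuclideanSpace ℝ (Fin n) → ℝ)
    -- the VMO-type modulus `η`
    (η : ℝ → ℝ≥0∞)
    (hη : ∀ s : ℝ, η s = ⨆ x₀ : EuclideanSpace ℝ (Fin n),
      (volume (ball x₀ s)) ^ (-(lam / (p * n))) *
        (∫⁻ x in ball x₀ s, ENNReal.ofReal (|f x| ^ p)) ^ (1 / p)) :
    (∃ C : ℝ≥0∞, 0 < C ∧ C < ⊤ ∧
      ∀ (x₀ : EuclideanSpace ℝ (Fin n)) (r β : ℝ), 0 < r → 0 < β →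
        ENNReal.ofReal (r ^ β) *
            ∫⁻ s in Ioi (2 * r),
              (∫⁻ y in ball x₀ s, ENNReal.ofReal (|f y| ^ p)) ^ (1 / p) *
                ENNReal.ofReal (s ^ (-(lam / p + β + 1))) ≤
          C * ∫⁻ τ in Ioi (1 : ℝ), η (2 * r * τ) * ENNReal.ofReal (τ ^ (-(β + 1)))) ∧
    ((∃ M : ℝ≥0∞, M < ⊤ ∧ ∀ s > (0 : ℝ), η s ≤ M) →
      Tendsto η (nhdsWithin 0 (Ioi 0)) (nhds 0) →
      ∀ β > (0 : ℝ),
        Tendsto (fun r : ℝ => ⨆ x₀ : EuclideanSpace ℝ (Fin n),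
            ENNReal.ofReal (r ^ β) *
              ∫⁻ s in Ioi (2 * r),
                (∫⁻ y in ball x₀ s, ENNReal.ofReal (|f y| ^ p)) ^ (1 / p) *
                  ENNReal.ofReal (s ^ (-(lam / p + β + 1))))
          (nhdsWithin 0 (Ioi 0)) (nhds 0)) := by
  have hunit_ball : volume (ball (0 : EuclideanSpace ℝ (Fin n)) 1) ≠ 0 :=
    (measure_ball_pos _ _ one_pos).ne'
  set C := volume (ball (0 : EuclideanSpace ℝ (Fin n)) 1) ^ (lam / (p * n))
  have hC_top : C ≠ ⊤ := ENNReal.rpow_ne_top_of_ne_zero hunit_ball measure_ball_lt_top.ne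
  have hdim : (finrank ℝ (EuclideanSpace ℝ (Fin n)) : ℝ) * (lam / (p * n)) = lam / p := by
    have : (n : ℝ) ≠ 0 := by positivity
    rw [finrank_euclideanSpace_fin]
    field_simp
  have hlocal : ∀ x₀ s, 0 < s → (∫⁻ y in ball x₀ s, ENNReal.ofReal (|f y| ^ p)) ^ (1 / p) ≤
      C * ENNReal.ofReal (s ^ (lam / p)) * η s := fun x₀ s hs => by
    rw [← hdim]
    refine le_measure_ball_rpow_mul_of_rpow_neg_mul_le volume x₀ hs ?_
    rw [hη s]
    exact le_iSup_of_le x₀ le_rfl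
  have hC₀ : 0 < C := ENNReal.rpow_pos (pos_iff_ne_zero.2 hunit_ball) measure_ball_lt_top.ne
  refine ⟨⟨C, hC₀, hC_top.lt_top, fun x₀ r β hr hβ =>
    ofReal_rpow_mul_lintegral_Ioi_le hC_top (hlocal x₀) hr.le (by linarith) (by positivity) hβ.le⟩,
    ?_⟩
  rintro ⟨M, hM, hηM⟩ hη₀ β hβ
  have hdouble : Tendsto (fun r : ℝ => 2 * r) (𝓝[>] 0) (𝓝[>] 0) :=
    ((continuous_const_mul 2).tendsto' 0 0 (mul_zero 2)).inf
      (tendsto_principal_principal.2 fun r hr => mem_Ioi.2 (mul_pos two_pos hr))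
  have hbound : Tendsto (fun r : ℝ =>
      C * ∫⁻ τ in Ioi (1 : ℝ), η (2 * r * τ) * ENNReal.ofReal (τ ^ (-(β + 1))))
      (𝓝[>] 0) (𝓝 0) := by
    simpa using ENNReal.Tendsto.const_mul
      ((tendsto_lintegral_Ioi_one_comp_mul_rpow_neg hM.ne hηM hη₀ hβ).comp hdouble) (Or.inr hC_top)
  refine tendsto_of_tendsto_of_tendsto_of_le_of_le' tendsto_const_nhds hbound
    (Eventually.of_forall fun _ => zero_le) ?_
  filter_upwards [self_mem_nhdsWithin] with r (hr : 0 < r)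
  exact iSup_le fun x₀ =>
    ofReal_rpow_mul_lintegral_Ioi_le hC_top (hlocal x₀) hr.le (by linarith) (by positivity) hβ.le

theorem stmt_13 (n : ℕ) (hn : 1 ≤ n) (p lam : ℝ) (hp : 1 ≤ p) (hlam0 : 0 < lam)
    (hlamn : lam < n) (f : EuclideanSpace ℝ (Fin n) → ℝ)
    (hfloc : ∀ (x₀ : EuclideanSpace ℝ (Fin n)) (r : ℝ), 0 < r →
      IntegrableOn (fun x => |f x| ^ p) (ball x₀ r) volume)
    -- the VMO-type modulus `η`
    (η : ℝ → ℝ≥0∞)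
    (hη : ∀ s : ℝ, η s = ⨆ x₀ : EuclideanSpace ℝ (Fin n),
      (volume (ball x₀ s)) ^ (-(lam / (p * n))) *
        (∫⁻ x in ball x₀ s, ENNReal.ofReal (|f x| ^ p)) ^ (1 / p)) :
    (∃ C : ℝ≥0∞, 0 < C ∧ C < ⊤ ∧
      ∀ (x₀ : EuclideanSpace ℝ (Fin n)) (r β : ℝ), 0 < r → 0 < β →
        ENNReal.ofReal (r ^ β) *
            ∫⁻ s in Ioi (2 * r),
              (∫⁻ y in ball x₀ s, ENNReal.ofReal (|f y| ^ p)) ^ (1 / p) *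
                ENNReal.ofReal (s ^ (-(lam / p + β + 1))) ≤
          C * ∫⁻ τ in Ioi (1 : ℝ), η (2 * r * τ) * ENNReal.ofReal (τ ^ (-(β + 1)))) ∧
    ((∃ M : ℝ≥0∞, M < ⊤ ∧ ∀ s > (0 : ℝ), η s ≤ M) →
      Tendsto η (nhdsWithin 0 (Ioi 0)) (nhds 0) →
      ∀ β > (0 : ℝ),
        Tendsto (fun r : ℝ => ⨆ x₀ : EuclideanSpace ℝ (Fin n),
            ENNReal.ofReal (r ^ β) *
              ∫⁻ s in Ioi (2 * r),
                (∫⁻ y in ball x₀ s, ENNReal.ofReal (|f y| ^ p)) ^ (1 / p) *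
                  ENNReal.ofReal (s ^ (-(lam / p + β + 1))))
          (nhdsWithin 0 (Ioi 0)) (nhds 0)) :=
  stmt_13_general n hn p lam f η hη
end
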